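/- Directed colimits of C∞-rings exist: let (I,≤) be a nonempty directed partially ordered set and let ((A_α,Φ_α))_{α ∈ I} be C∞-rings together with C∞-homomorphisms μ_{αβ} : A_α → A_β for α ≤ β satisfying μ_{αα} = id and μ_{βγ} ∘ μ_{αβ} = μ_{αγ} for α ≤ β ≤ γ. Then there exists a C∞-ring (A,Φ) and C∞-homomorphisms λ_α : A_α → A with λ_β ∘ μ_{αβ} = λ_α for all α ≤ β, such that for every C∞-ring (B,Ψ) and every family of C∞-homomorphisms ζ_α : A_α → B with ζ_β ∘ μ_{αβ} = ζ_α for all α ≤ β, there is a unique C∞-homomorphism θ : A → B with θ ∘ λ_α = ζ_α for every α ∈ I. -/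

import Mathlib

universe u v w

/-- A C∞-structure on a type `A`: an interpretation of every smooth function
`f : ℝⁿ → ℝ` as an `n`-ary operation on `A`. -/
def CInfStructure (A : Type u) :=
  ∀ n : ℕ, ∀ f : (Fin n → ℝ) → ℝ, ContDiff ℝ (⊤ : ℕ∞) f → (Fin n → A) → A

/-- A C∞-homomorphism (morphism of C∞-structures). -/
def IsCInfHom {A : Type u} {B : Type v} (Φ : CInfStructure A) (Ψ : CInfStructure B)
    (φ : A → B) : Prop :=
  ∀ (n : ℕ) (f : (Fin n → ℝ) → ℝ) (hf : ContDiff ℝ (⊤ : ℕ∞) f) (a : Fin n → A),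
    φ (Φ n f hf a) = Ψ n f hf (φ ∘ a)

/-- A C∞-structure is a C∞-ring when it preserves projections and composition. -/
structure IsCInfRing {A : Type u} (Φ : CInfStructure A) : Prop where
  proj : ∀ (n : ℕ) (k : Fin n) (h : ContDiff ℝ (⊤ : ℕ∞) (fun x : Fin n → ℝ => x k))
      (a : Fin n → A), Φ n (fun x => x k) h a = a k
  comp : ∀ (n k : ℕ) (f : (Fin n → ℝ) → ℝ) (hf : ContDiff ℝ (⊤ : ℕ∞) f)
      (g : Fin n → ((Fin k → ℝ) → ℝ)) (hg : ∀ i, ContDiff ℝ (⊤ : ℕ∞) (g i))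
      (h : ContDiff ℝ (⊤ : ℕ∞) (fun x : Fin k → ℝ => f (fun i => g i x)))
      (a : Fin k → A),
      Φ k (fun x => f (fun i => g i x)) h a = Φ n f hf (fun i => Φ k (g i) (hg i) a)

section ColimAux

variable {I : Type u} [PartialOrder I] {A : I → Type v}

/-- The relation identifying elements of the directed system that become equal
at some later stage. -/
def ColimRel (μ : ∀ i j : I, i ≤ j → A i → A j) (x y : Σ i, A i) : Prop :=
  ∃ (k : I) (h1 : x.1 ≤ k) (h2 : y.1 ≤ k), μ x.1 k h1 x.2 = μ y.1 k h2 y.2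

theorem mu_mu {μ : ∀ i j : I, i ≤ j → A i → A j}
    (hμcomp : ∀ (i j k : I) (hij : i ≤ j) (hjk : j ≤ k),
      μ j k hjk ∘ μ i j hij = μ i k (hij.trans hjk))
    {i j k : I} (hij : i ≤ j) (hjk : j ≤ k) (x : A i) :
    μ j k hjk (μ i j hij x) = μ i k (hij.trans hjk) x :=
  congrFun (hμcomp i j k hij hjk) x

theorem colimRel_equiv {μ : ∀ i j : I, i ≤ j → A i → A j}
    (hdir : ∀ a b : I, ∃ c : I, a ≤ c ∧ b ≤ c)
    (hμid : ∀ i : I, μ i i le_rfl = id)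
    (hμcomp : ∀ (i j k : I) (hij : i ≤ j) (hjk : j ≤ k),
      μ j k hjk ∘ μ i j hij = μ i k (hij.trans hjk)) :
    Equivalence (ColimRel μ) := by
  constructor
  · intro x; exact ⟨x.1, le_rfl, le_rfl, rfl⟩
  · rintro x y ⟨k, h1, h2, h⟩; exact ⟨k, h2, h1, h.symm⟩
  · rintro x y z ⟨k, h1, h2, h⟩ ⟨l, h3, h4, h'⟩
    obtain ⟨m, hkm, hlm⟩ := hdir k l
    refine ⟨m, h1.trans hkm, h4.trans hlm, ?_⟩
    have e1 : μ k m hkm (μ x.1 k h1 x.2) = μ k m hkm (μ y.1 k h2 y.2) := by rw [h]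
    have e2 : μ l m hlm (μ y.1 l h3 y.2) = μ l m hlm (μ z.1 l h4 z.2) := by rw [h']
    rw [mu_mu hμcomp, mu_mu hμcomp] at e1
    rw [mu_mu hμcomp, mu_mu hμcomp] at e2
    exact e1.trans e2

theorem colim_exact {μ : ∀ i j : I, i ≤ j → A i → A j}
    (hdir : ∀ a b : I, ∃ c : I, a ≤ c ∧ b ≤ c)
    (hμid : ∀ i : I, μ i i le_rfl = id)
    (hμcomp : ∀ (i j k : I) (hij : i ≤ j) (hjk : j ≤ k),
      μ j k hjk ∘ μ i j hij = μ i k (hij.trans hjk))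
    {x y : Σ i, A i} (H : Quot.mk (ColimRel μ) x = Quot.mk (ColimRel μ) y) :
    ColimRel μ x y :=
  (colimRel_equiv hdir hμid hμcomp).eqvGen_iff.mp (Quot.eqvGen_exact H)

/-- The C∞-structure on the colimit, defined by choosing representatives and a
common upper bound of their indices. -/
noncomputable def colimΦ (Φ : ∀ i, CInfStructure (A i))
    (μ : ∀ i j : I, i ≤ j → A i → A j)
    (hub : ∀ (n : ℕ) (s : Fin n → I), ∃ j, ∀ k, s k ≤ j) :
    CInfStructure (Quot (ColimRel μ)) := fun n f hf a =>
  let r : Fin n → Σ i, A i := fun k => Classical.choose (Quot.exists_rep (a k))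
  Quot.mk _ ⟨Classical.choose (hub n fun k => (r k).1),
    Φ _ n f hf (fun k =>
      μ (r k).1 _ (Classical.choose_spec (hub n fun k => (r k).1) k) (r k).2)⟩

theorem push_eq {Φ : ∀ i, CInfStructure (A i)}
    {μ : ∀ i j : I, i ≤ j → A i → A j}
    (hμ : ∀ (i j : I) (h : i ≤ j), IsCInfHom (Φ i) (Φ j) (μ i j h))
    (hμcomp : ∀ (i j k : I) (hij : i ≤ j) (hjk : j ≤ k),
      μ j k hjk ∘ μ i j hij = μ i k (hij.trans hjk))
    {n : ℕ} {f : (Fin n → ℝ) → ℝ} {hf : ContDiff ℝ (⊤ : ℕ∞) f}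
    (i : Fin n → I) (x : ∀ k, A (i k)) (j M : I)
    (hj : ∀ k, i k ≤ j) (hjM : j ≤ M) :
    μ j M hjM (Φ j n f hf fun k => μ (i k) j (hj k) (x k)) =
      Φ M n f hf fun k => μ (i k) M ((hj k).trans hjM) (x k) := by
  rw [hμ j M hjM n f hf]
  congr 1
  funext k
  exact mu_mu hμcomp (hj k) hjM (x k)

/-- Key lemma: the value of the colimit C∞-structure can be computed from any system
of representatives and any common upper bound. -/
theorem colimΦ_eq {Φ : ∀ i, CInfStructure (A i)}
    {μ : ∀ i j : I, i ≤ j → A i → A j}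
    (hdir : ∀ a b : I, ∃ c : I, a ≤ c ∧ b ≤ c)
    (hμ : ∀ (i j : I) (h : i ≤ j), IsCInfHom (Φ i) (Φ j) (μ i j h))
    (hμid : ∀ i : I, μ i i le_rfl = id)
    (hμcomp : ∀ (i j k : I) (hij : i ≤ j) (hjk : j ≤ k),
      μ j k hjk ∘ μ i j hij = μ i k (hij.trans hjk))
    (hub : ∀ (n : ℕ) (s : Fin n → I), ∃ j, ∀ k, s k ≤ j)
    {n : ℕ} {f : (Fin n → ℝ) → ℝ} {hf : ContDiff ℝ (⊤ : ℕ∞) f}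
    (a : Fin n → Quot (ColimRel μ))
    (i : Fin n → I) (x : ∀ k, A (i k))
    (ha : ∀ k, Quot.mk (ColimRel μ) ⟨i k, x k⟩ = a k)
    (j : I) (hj : ∀ k, i k ≤ j) :
    colimΦ Φ μ hub n f hf a =
      Quot.mk (ColimRel μ) ⟨j, Φ j n f hf fun k => μ (i k) j (hj k) (x k)⟩ := by
  -- the canonical representatives used in the definition
  set r : Fin n → Σ i, A i := fun k => Classical.choose (Quot.exists_rep (a k)) with hr
  have hrspec : ∀ k, Quot.mk (ColimRel μ) (r k) = a k :=
    fun k => Classical.choose_spec (Quot.exists_rep (a k))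
  set j' : I := Classical.choose (hub n fun k => (r k).1) with hj'
  have hj'spec : ∀ k, (r k).1 ≤ j' := Classical.choose_spec (hub n fun k => (r k).1)
  -- relation between the two representative systems
  have hrel : ∀ k, ColimRel μ (r k) ⟨i k, x k⟩ := fun k =>
    colim_exact hdir hμid hμcomp ((hrspec k).trans (ha k).symm)
  -- witnesses of the relations
  choose m hm1 hm2 hm using hrel
  -- a big common upper bound
  obtain ⟨M0, hM0⟩ := hub n m
  obtain ⟨M1, hM1a, hM1b⟩ := hdir M0 j'
  obtain ⟨M, hM2a, hM2b⟩ := hdir M1 j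
  have hj'M : j' ≤ M := hM1b.trans hM2a
  have hjM : j ≤ M := hM2b
  have hmM : ∀ k, m k ≤ M := fun k => (hM0 k).trans (hM1a.trans hM2a)
  -- the pushed representatives agree at M
  have hagree : ∀ k, μ (r k).1 M ((hj'spec k).trans hj'M) (r k).2 =
      μ (i k) M ((hj k).trans hjM) (x k) := by
    intro k
    have := congrArg (μ (m k) M (hmM k)) (hm k)
    rw [mu_mu hμcomp, mu_mu hμcomp] at this
    exact this
  show Quot.mk (ColimRel μ)
      ⟨j', Φ j' n f hf fun k => μ (r k).1 j' (hj'spec k) (r k).2⟩ = _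
  apply Quot.eqvGen_sound
  apply Relation.EqvGen.trans _ ⟨M, Φ M n f hf fun k => μ (i k) M ((hj k).trans hjM) (x k)⟩
  · apply Relation.EqvGen.rel
    refine ⟨M, hj'M, le_rfl, ?_⟩
    rw [push_eq hμ hμcomp (fun k => (r k).1) (fun k => (r k).2) j' M hj'spec hj'M]
    rw [congrFun (hμid M) _]
    simp only [id_eq]
    congr 1
    funext k
    exact hagree k
  · apply Relation.EqvGen.symm
    apply Relation.EqvGen.rel
    refine ⟨M, hjM, le_rfl, ?_⟩
    rw [push_eq hμ hμcomp i x j M hj hjM, congrFun (hμid M) _]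
    rfl

end ColimAux

/-- **Directed colimits of C∞-rings exist.** Given a nonempty directed poset `(I, ≤)`
and a directed system `((A_i, Φ_i), μ_{ij})` of C∞-rings and C∞-homomorphisms, there
is a C∞-ring `(L, ΦL)` with C∞-homomorphisms `lam i : A i → L`, compatible with the
transition maps, satisfying the universal property of the colimit. -/
theorem directed_colimit_cInfRing {I : Type u} [PartialOrder I] [Nonempty I]
    (hdir : ∀ a b : I, ∃ c : I, a ≤ c ∧ b ≤ c)
    (A : I → Type v) (Φ : ∀ i, CInfStructure (A i)) (hΦ : ∀ i, IsCInfRing (Φ i))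
    (μ : ∀ i j : I, i ≤ j → A i → A j)
    (hμ : ∀ (i j : I) (h : i ≤ j), IsCInfHom (Φ i) (Φ j) (μ i j h))
    (hμid : ∀ i : I, μ i i le_rfl = id)
    (hμcomp : ∀ (i j k : I) (hij : i ≤ j) (hjk : j ≤ k),
      μ j k hjk ∘ μ i j hij = μ i k (hij.trans hjk)) :
    ∃ (L : Type (max u v)) (ΦL : CInfStructure L) (lam : ∀ i : I, A i → L),
      IsCInfRing ΦL ∧
      (∀ i : I, IsCInfHom (Φ i) ΦL (lam i)) ∧
      (∀ (i j : I) (h : i ≤ j), lam j ∘ μ i j h = lam i) ∧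
      ∀ (B : Type w) (Ψ : CInfStructure B), IsCInfRing Ψ →
        ∀ ζ : ∀ i : I, A i → B, (∀ i : I, IsCInfHom (Φ i) Ψ (ζ i)) →
          (∀ (i j : I) (h : i ≤ j), ζ j ∘ μ i j h = ζ i) →
          ∃! θ : L → B, IsCInfHom ΦL Ψ θ ∧ ∀ i : I, θ ∘ lam i = ζ i := by
  classical
  -- finite upper bounds
  haveI : IsDirected I (· ≤ ·) := ⟨hdir⟩
  have hub : ∀ (n : ℕ) (s : Fin n → I), ∃ j, ∀ k, s k ≤ j := by
    intro n s
    obtain ⟨M, hM⟩ := Finset.exists_le (Finset.image s Finset.univ)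
    exact ⟨M, fun k => hM _ (Finset.mem_image_of_mem s (Finset.mem_univ k))⟩
  refine ⟨Quot (ColimRel μ), colimΦ Φ μ hub,
    fun i x => Quot.mk _ ⟨i, x⟩, ?_, ?_, ?_, ?_⟩
  · -- C∞-ring axioms
    constructor
    · intro n k h a
      obtain ⟨r, hr⟩ : ∃ r : Fin n → Σ i, A i, ∀ m, Quot.mk (ColimRel μ) (r m) = a m := by
        choose r hr using fun m => Quot.exists_rep (a m)
        exact ⟨r, hr⟩
      obtain ⟨j, hj⟩ := hub n fun m => (r m).1
      rw [colimΦ_eq hdir hμ hμid hμcomp hub a (fun m => (r m).1) (fun m => (r m).2)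
        hr j hj]
      rw [(hΦ j).proj n k h]
      rw [← hr k]
      apply Quot.sound
      exact ⟨j, le_rfl, hj k, congrFun (hμid j) _⟩
    · intro n k f hf g hg h a
      obtain ⟨r, hr⟩ : ∃ r : Fin k → Σ i, A i, ∀ m, Quot.mk (ColimRel μ) (r m) = a m := by
        choose r hr using fun m => Quot.exists_rep (a m)
        exact ⟨r, hr⟩
      obtain ⟨j, hj⟩ := hub k fun m => (r m).1
      have hgq : ∀ i', colimΦ Φ μ hub k (g i') (hg i') a =
          Quot.mk (ColimRel μ) ⟨j, Φ j k (g i') (hg i')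
            fun m => μ (r m).1 j (hj m) (r m).2⟩ := fun i' =>
        colimΦ_eq hdir hμ hμid hμcomp hub a (fun m => (r m).1) (fun m => (r m).2) hr j hj
      rw [colimΦ_eq hdir hμ hμid hμcomp hub a (fun m => (r m).1) (fun m => (r m).2)
        hr j hj]
      rw [colimΦ_eq hdir hμ hμid hμcomp hub
        (fun i' => colimΦ Φ μ hub k (g i') (hg i') a)
        (fun _ => j)
        (fun i' => Φ j k (g i') (hg i') fun m => μ (r m).1 j (hj m) (r m).2)
        (fun i' => (hgq i').symm) j (fun _ => le_rfl)]
      rw [(hΦ j).comp n k f hf g hg h]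
      simp only [hμid, id_eq]
  · -- each lam i is a C∞-homomorphism
    intro i n f hf a
    show Quot.mk (ColimRel μ) ⟨i, Φ i n f hf a⟩ =
      colimΦ Φ μ hub n f hf (fun k => Quot.mk (ColimRel μ) ⟨i, a k⟩)
    rw [colimΦ_eq hdir hμ hμid hμcomp hub (fun k => Quot.mk (ColimRel μ) ⟨i, a k⟩)
      (fun _ => i) a (fun _ => rfl) i (fun _ => le_rfl)]
    simp only [hμid, id_eq]
  · -- compatibility with transition maps
    intro i j h
    funext x
    apply Quot.sound
    exact ⟨j, le_rfl, h, congrFun (hμid j) _⟩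
  · -- universal property
    intro B Ψ hΨ ζ hζ hζcomp
    refine ⟨Quot.lift (fun p : Σ i, A i => ζ p.1 p.2) ?_, ⟨?_, ?_⟩, ?_⟩
    · rintro x y ⟨m, h1, h2, hm⟩
      have e1 : ζ m (μ x.1 m h1 x.2) = ζ x.1 x.2 := congrFun (hζcomp x.1 m h1) x.2
      have e2 : ζ m (μ y.1 m h2 y.2) = ζ y.1 y.2 := congrFun (hζcomp y.1 m h2) y.2
      rw [← e1, ← e2, hm]
    · -- θ is a C∞-homomorphism
      intro n f hf a
      obtain ⟨r, hr⟩ : ∃ r : Fin n → Σ i, A i, ∀ m, Quot.mk (ColimRel μ) (r m) = a m := by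
        choose r hr using fun m => Quot.exists_rep (a m)
        exact ⟨r, hr⟩
      obtain ⟨j, hj⟩ := hub n fun m => (r m).1
      rw [colimΦ_eq hdir hμ hμid hμcomp hub a (fun m => (r m).1) (fun m => (r m).2)
        hr j hj]
      show ζ j (Φ j n f hf fun m => μ (r m).1 j (hj m) (r m).2) = _
      rw [hζ j n f hf]
      congr 1
      funext m
      show ζ j (μ (r m).1 j (hj m) (r m).2) = _
      rw [Function.comp_apply, ← hr m]
      exact congrFun (hζcomp (r m).1 j (hj m)) (r m).2
    · intro i
      funext x
      rfl
    · rintro θ' ⟨hθ'hom, hθ'comm⟩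
      funext x
      induction x using Quot.ind with
      | mk p =>
        obtain ⟨i, y⟩ := p
        exact congrFun (hθ'comm i) y
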